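/- arXiv:2405.12782 — 8 statements merged into one kernel-verified Lean document; each statement's English description precedes it below -/
import Mathlib

section
/- For each positive integer r, there exists a coloring of the edges of the complete graph on 2^r vertices using r colors that contains no monochromatic triangle (i.e., no three vertices whose three pairwise edges all receive the same color). -/
/-!
Colour the edge `{i, j}` of `K_{2^r}` by the position of the most significant bit in which
the binary expansions of `i` and `j` differ; this position is below `r`. If three vertices had
all three edges of colour `k`, their `k`-th bits would be pairwise distinct, which is impossible
for three bits.
-/

namespace Nat

-- Junk value: `highestDiffBit a a = Nat.log2 0 = 0`.
def highestDiffBit (a b : ℕ) : ℕ := (a ^^^ b).log2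

theorem highestDiffBit_comm (a b : ℕ) : highestDiffBit a b = highestDiffBit b a := by
  rw [highestDiffBit, highestDiffBit, Nat.xor_comm]

theorem highestDiffBit_lt_of_lt_two_pow {a b r : ℕ} (hr : 0 < r) (ha : a < 2 ^ r)
    (hb : b < 2 ^ r) : highestDiffBit a b < r := by
  rcases eq_or_ne (a ^^^ b) 0 with h | h
  · simpa [highestDiffBit, h] using hr
  · exact (Nat.log2_lt h).mpr (Nat.xor_lt_two_pow ha hb)

theorem testBit_highestDiffBit_ne {a b : ℕ} (h : a ≠ b) :
    a.testBit (highestDiffBit a b) ≠ b.testBit (highestDiffBit a b) := by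
  have hxor : a ^^^ b ≠ 0 := fun h0 => h (Nat.eq_of_xor_eq_zero h0)
  simpa [highestDiffBit, Nat.testBit_xor] using Nat.testBit_log2 hxor

theorem not_highestDiffBit_eq_of_ne {a b c : ℕ} (hab : a ≠ b) (hbc : b ≠ c) (hac : a ≠ c)
    (h₁ : highestDiffBit a b = highestDiffBit b c)
    (h₂ : highestDiffBit a b = highestDiffBit a c) : False := by
  have tab := testBit_highestDiffBit_ne hab
  have tbc := testBit_highestDiffBit_ne hbc
  have tac := testBit_highestDiffBit_ne hac
  rw [← h₁] at tbc
  rw [← h₂] at tac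
  revert tab tbc tac
  cases a.testBit (highestDiffBit a b) <;> cases b.testBit (highestDiffBit a b) <;>
    cases c.testBit (highestDiffBit a b) <;> decide

end Nat

/-- For each positive integer `r`, there exists an edge-coloring of the complete graph
on `2^r` vertices using `r` colors with no monochromatic triangle. -/
theorem erdos_coloring_two_pow (r : ℕ) (hr : 0 < r) :
    ∃ c : Fin (2 ^ r) → Fin (2 ^ r) → Fin r,
      (∀ i j, c i j = c j i) ∧
      ¬ ∃ x y z : Fin (2 ^ r), x ≠ y ∧ y ≠ z ∧ x ≠ z ∧
          c x y = c y z ∧ c x y = c x z := by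
  refine ⟨fun i j => ⟨Nat.highestDiffBit i j, Nat.highestDiffBit_lt_of_lt_two_pow hr i.2 j.2⟩,
    fun i j => Fin.ext (Nat.highestDiffBit_comm i j), ?_⟩
  rintro ⟨x, y, z, hxy, hyz, hxz, h₁, h₂⟩
  exact Nat.not_highestDiffBit_eq_of_ne (Fin.val_ne_of_ne hxy) (Fin.val_ne_of_ne hyz)
    (Fin.val_ne_of_ne hxz) (Fin.val_eq_of_eq h₁) (Fin.val_eq_of_eq h₂)
end

section
/- Let (X, d) be a compact metric space and f : X → X be continuous. Fix ε > 0 and a positive integer n. Suppose C_d(X, ε) = k and s_f(n, ε) = m. Then R(k+1, n) > m; equivalently, there exists a coloring of the edges of the complete graph on m vertices using n colors with no monochromatic complete subgraph on k+1 vertices. -/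
/-- An `(n, ε)`-separated set (as a finset) for the map `f`. -/
def IsSeparatedSet {X : Type*} [MetricSpace X] (f : X → X) (n : ℕ) (ε : ℝ)
    (A : Finset X) : Prop :=
  ∀ x ∈ A, ∀ y ∈ A, x ≠ y → ∃ i < n, ε < dist (f^[i] x) (f^[i] y)

/-- **Principle 1.3.** Let `X` be a compact metric space, `f : X → X` continuous,
`ε > 0`.  Suppose `C_d(X, ε) = k` (maximum cardinality of a subset of `X` whose points
are pairwise at distance `> ε`) and `s_f(n, ε) = m` (maximum cardinality of an
`(n, ε)`-separated set).  Then `R(k+1, n) > m`: there is an edge-coloring of the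
complete graph on `m` vertices with `n` colors having no monochromatic `K_{k+1}`. -/
theorem ramsey_gt_of_separated {X : Type*} [MetricSpace X] [CompactSpace X]
    (f : X → X) (hf : Continuous f) (ε : ℝ) (hε : 0 < ε) (n k m : ℕ) (hn : 0 < n)
    (hk_ex : ∃ A : Finset X, A.card = k ∧ ∀ x ∈ A, ∀ y ∈ A, x ≠ y → ε < dist x y)
    (hk_max : ∀ A : Finset X, (∀ x ∈ A, ∀ y ∈ A, x ≠ y → ε < dist x y) → A.card ≤ k)
    (hm_ex : ∃ A : Finset X, A.card = m ∧ IsSeparatedSet f n ε A)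
    (hm_max : ∀ A : Finset X, IsSeparatedSet f n ε A → A.card ≤ m) :
    ∃ c : Fin m → Fin m → Fin n,
      (∀ i j, c i j = c j i) ∧
      ¬ ∃ S : Finset (Fin m), S.card = k + 1 ∧
          ∃ a : Fin n, ∀ i ∈ S, ∀ j ∈ S, i ≠ j → c i j = a := by
  classical
  obtain ⟨A, hA, hsep⟩ := hm_ex
  set e : Fin m → X := fun i => ((A.equivFinOfCardEq hA).symm i : X) with he
  have he_mem : ∀ i, e i ∈ A := fun i => ((A.equivFinOfCardEq hA).symm i).2
  have he_inj : Function.Injective e := fun i j h => by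
    have := Subtype.coe_injective h
    exact (A.equivFinOfCardEq hA).symm.injective this
  have H : ∀ i j : Fin m, i ≠ j →
      ∃ l, l < n ∧ ε < dist (f^[l] (e i)) (f^[l] (e j)) := by
    intro i j hij
    obtain ⟨l, hl, hd⟩ := hsep (e i) (he_mem i) (e j) (he_mem j)
      (fun h => hij (he_inj h))
    exact ⟨l, hl, hd⟩
  refine ⟨fun i j => if h : i ≠ j then ⟨Nat.find (H i j h), (Nat.find_spec (H i j h)).1⟩
      else ⟨0, hn⟩, ?_, ?_⟩
  · intro i j
    by_cases h : i ≠ j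
    · have h' : j ≠ i := h.symm
      simp only [dif_pos h, dif_pos h']
      have : Nat.find (H i j h) = Nat.find (H j i h') := by
        apply le_antisymm
        · exact Nat.find_mono (fun l ⟨hl, hd⟩ => ⟨hl, by rwa [dist_comm]⟩)
        · exact Nat.find_mono (fun l ⟨hl, hd⟩ => ⟨hl, by rwa [dist_comm]⟩)
      simp [this]
    · push_neg at h; subst h; rfl
  · rintro ⟨S, hS, a, hmono⟩
    have key : ∀ i ∈ S, ∀ j ∈ S, i ≠ j →
        ε < dist (f^[(a : ℕ)] (e i)) (f^[(a : ℕ)] (e j)) := by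
      intro i hi j hj hij
      have hc := hmono i hi j hj hij
      simp only [dif_pos hij] at hc
      have : Nat.find (H i j hij) = (a : ℕ) := congrArg Fin.val hc
      have hspec := (Nat.find_spec (H i j hij)).2
      rwa [this] at hspec
    set T : Finset X := S.image (fun i => f^[(a : ℕ)] (e i)) with hT
    have hinj : Set.InjOn (fun i => f^[(a : ℕ)] (e i)) S := by
      intro i hi j hj hEq
      by_contra hij
      have := key i hi j hj hij
      rw [show f^[(a : ℕ)] (e i) = f^[(a : ℕ)] (e j) from hEq] at this
      simp at this
      linarith
    have hTcard : T.card = k + 1 := by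
      rw [hT, Finset.card_image_of_injOn hinj, hS]
    have hTsep : ∀ x ∈ T, ∀ y ∈ T, x ≠ y → ε < dist x y := by
      intro x hx y hy hxy
      rw [hT, Finset.mem_image] at hx hy
      obtain ⟨i, hi, rfl⟩ := hx
      obtain ⟨j, hj, rfl⟩ := hy
      exact key i hi j hj (fun h => hxy (by rw [h]))
    have := hk_max T hTsep
    omega
end

section
/- For every p = 6^ℓ with ℓ ≥ 1 and every positive integer n, the Bowen ball about 0 satisfies μ(B_n(0, 1/6)) = 3^{−n}, where B_n is taken with respect to the map f_p : x ↦ px on 𝕋. -/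
open MeasureTheory ENNReal Set

/-- The `×p` map `x ↦ p • x` on the circle `ℝ/ℤ`. -/
noncomputable def timesMap (p : ℕ) : UnitAddCircle → UnitAddCircle := fun x => p • x

/-- The open Bowen ball `B_n(x, ε)` of the map `f`. -/
def bowenBall (f : UnitAddCircle → UnitAddCircle) (n : ℕ) (x : UnitAddCircle)
    (ε : ℝ) : Set UnitAddCircle :=
  {y | ∀ i < n, dist (f^[i] x) (f^[i] y) < ε}

namespace BowenAux

/-- Lift of the ball of radius 1/6 about 0 to ℝ. -/
def A : Set ℝ := {x | ∃ k : ℤ, |x - (k : ℝ)| < 1/6}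

/-- Lift of the Bowen ball to ℝ. -/
def E (p n : ℕ) : Set ℝ := {x | ∀ i < n, (p : ℝ) ^ i * x ∈ A}

lemma A_eq : A = ⋃ k : ℤ, Ioo ((k : ℝ) - 1/6) ((k : ℝ) + 1/6) := by
  ext x
  simp only [A, mem_setOf_eq, mem_iUnion, mem_Ioo]
  constructor
  · rintro ⟨k, hk⟩
    rw [abs_sub_lt_iff] at hk
    exact ⟨k, by linarith [hk.1, hk.2], by linarith [hk.1, hk.2]⟩
  · rintro ⟨k, h1, h2⟩
    exact ⟨k, by rw [abs_sub_lt_iff]; constructor <;> linarith⟩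

lemma measA : MeasurableSet A := by
  rw [A_eq]; exact MeasurableSet.iUnion fun k => measurableSet_Ioo

lemma E_eq (p n : ℕ) :
    E p n = ⋂ i, ⋂ _ : i < n, (fun x : ℝ => (p : ℝ) ^ i * x) ⁻¹' A := by
  ext x; simp [E]

lemma measE (p n : ℕ) : MeasurableSet (E p n) := by
  rw [E_eq]
  exact MeasurableSet.iInter fun i => MeasurableSet.iInter fun _ =>
    measA.preimage (measurable_const_mul _)

lemma A_int_shift (x : ℝ) (k : ℤ) : x + (k : ℝ) ∈ A ↔ x ∈ A := by
  constructor
  · rintro ⟨m, hm⟩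
    refine ⟨m - k, ?_⟩
    have : x - ((m - k : ℤ) : ℝ) = x + k - m := by push_cast; ring
    rwa [this]
  · rintro ⟨m, hm⟩
    refine ⟨m + k, ?_⟩
    have : x + k - ((m + k : ℤ) : ℝ) = x - m := by push_cast; ring
    rwa [this]

lemma E_int_shift (p n : ℕ) : ∀ (x : ℝ) (k : ℤ), x + (k : ℝ) ∈ E p n ↔ x ∈ E p n := by
  intro x k
  unfold E
  simp only [mem_setOf_eq]
  refine forall₂_congr fun i hi => ?_
  have h : (p : ℝ) ^ i * (x + (k : ℝ)) = (p : ℝ) ^ i * x + (((p : ℤ) ^ i * k : ℤ) : ℝ) := by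
    push_cast; ring
  rw [h, A_int_shift]

lemma shift_measure {S : Set ℝ} (hS : ∀ (x : ℝ) (k : ℤ), x + (k : ℝ) ∈ S ↔ x ∈ S)
    (a b : ℝ) (k : ℤ) : volume (S ∩ Ioc (a + (k : ℝ)) (b + (k : ℝ))) = volume (S ∩ Ioc a b) := by
  have h : (fun x : ℝ => x + (k : ℝ)) ⁻¹' (S ∩ Ioc (a + (k : ℝ)) (b + (k : ℝ))) = S ∩ Ioc a b := by
    ext x
    simp only [mem_preimage, mem_inter_iff, mem_Ioc, hS]
    constructor
    · rintro ⟨h1, h2, h3⟩; exact ⟨h1, by linarith, by linarith⟩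
    · rintro ⟨h1, h2, h3⟩; exact ⟨h1, by linarith, by linarith⟩
  rw [← h, measure_preimage_add_right]

lemma split_measure {S : Set ℝ} (hSm : MeasurableSet S) {a b c : ℝ} (hab : a ≤ b) (hbc : b ≤ c) :
    volume (S ∩ Ioc a c) = volume (S ∩ Ioc a b) + volume (S ∩ Ioc b c) := by
  rw [← Ioc_union_Ioc_eq_Ioc hab hbc, inter_union_distrib_left]
  refine measure_union ?_ (hSm.inter measurableSet_Ioc)
  refine Disjoint.mono inter_subset_right inter_subset_right ?_
  rw [Ioc_disjoint_Ioc]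
  simp [hbc]

lemma unit_blocks {S : Set ℝ} (hSm : MeasurableSet S)
    (hS : ∀ (x : ℝ) (k : ℤ), x + (k : ℝ) ∈ S ↔ x ∈ S) (m : ℕ) :
    volume (S ∩ Ioc 0 (m : ℝ)) = m * volume (S ∩ Ioc 0 1) := by
  induction m with
  | zero => simp
  | succ m ih =>
    have h1 : volume (S ∩ Ioc (m : ℝ) ((m : ℝ) + 1)) = volume (S ∩ Ioc 0 1) := by
      have := shift_measure hS 0 1 (m : ℤ)
      simpa [add_comm] using this
    have h2 : (0 : ℝ) ≤ (m : ℝ) := Nat.cast_nonneg m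
    rw [show ((m + 1 : ℕ) : ℝ) = (m : ℝ) + 1 by push_cast; ring,
      split_measure hSm h2 (by linarith), ih, h1]
    push_cast
    ring

lemma half_shift {S : Set ℝ} (hSm : MeasurableSet S)
    (hS : ∀ (x : ℝ) (k : ℤ), x + (k : ℝ) ∈ S ↔ x ∈ S) :
    volume (S ∩ Ioc (-(1/2) : ℝ) (1/2)) = volume (S ∩ Ioc 0 1) := by
  have h1 : volume (S ∩ Ioc ((1:ℝ)/2) 1) = volume (S ∩ Ioc (-(1/2) : ℝ) 0) := by
    have := shift_measure hS (-(1/2)) 0 1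
    norm_num at this
    convert this using 3 <;> norm_num
  have hR : volume (S ∩ Ioc (0:ℝ) 1)
      = volume (S ∩ Ioc (0:ℝ) (1/2)) + volume (S ∩ Ioc ((1:ℝ)/2) 1) :=
    split_measure hSm (by norm_num) (by norm_num)
  rw [show volume (S ∩ Ioc (-(1/2) : ℝ) (1/2))
      = volume (S ∩ Ioc (-(1/2):ℝ) 0) + volume (S ∩ Ioc (0:ℝ) (1/2)) from
    split_measure hSm (by norm_num) (by norm_num), hR, h1]
  exact add_comm _ _

lemma A_inter : A ∩ Ioc (-(1/2) : ℝ) (1/2) = Ioo (-(1/6) : ℝ) (1/6) := by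
  ext x
  simp only [A, mem_inter_iff, mem_setOf_eq, mem_Ioc, mem_Ioo]
  constructor
  · rintro ⟨⟨k, hk⟩, h1, h2⟩
    rw [abs_sub_lt_iff] at hk
    have hk0 : k = 0 := by
      have habs : |(k : ℝ)| < 1 := by
        rw [abs_lt]; constructor <;> linarith [hk.1, hk.2]
      rw [abs_lt] at habs
      have hlo : (-1 : ℤ) < k := by exact_mod_cast habs.1
      have hhi : (k : ℤ) < 1 := by exact_mod_cast habs.2
      omega
    subst hk0
    push_cast at hk
    constructor <;> linarith [hk.1, hk.2]
  · rintro ⟨h1, h2⟩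
    refine ⟨⟨0, ?_⟩, by linarith, by linarith⟩
    rw [abs_sub_lt_iff]
    push_cast
    constructor <;> linarith

lemma E_succ (p n : ℕ) : E p (n + 1) = A ∩ (fun x : ℝ => (p : ℝ) * x) ⁻¹' E p n := by
  ext x
  simp only [E, mem_setOf_eq, mem_inter_iff, mem_preimage]
  constructor
  · intro h
    refine ⟨by simpa using h 0 (Nat.succ_pos n), fun i hi => ?_⟩
    have h' := h (i + 1) (by omega)
    rw [pow_succ, mul_assoc] at h'
    exact h'
  · rintro ⟨h0, h⟩ i hi
    match i with
    | 0 => simpa using h0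
    | (j + 1) =>
      have h' := h j (by omega)
      rw [pow_succ, mul_assoc]
      exact h'

lemma E_one (p : ℕ) : E p 1 = A := by
  ext x
  simp [E, Nat.lt_one_iff]

lemma base (ℓ : ℕ) : volume (E (6 ^ ℓ) 1 ∩ Ioc (-(1/2) : ℝ) (1/2)) = (3 : ℝ≥0∞)⁻¹ := by
  rw [E_one, A_inter, Real.volume_Ioo]
  rw [show (1/6 : ℝ) - -(1/6) = 1/3 by norm_num]
  rw [show (3 : ℝ≥0∞)⁻¹ = ENNReal.ofReal (1/3) by
    rw [ENNReal.ofReal_div_of_pos (by norm_num)]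
    simp]

lemma step (ℓ n : ℕ) (hℓ : 1 ≤ ℓ) :
    volume (E (6 ^ ℓ) (n + 1) ∩ Ioc (-(1/2) : ℝ) (1/2))
      = 3⁻¹ * volume (E (6 ^ ℓ) n ∩ Ioc (-(1/2) : ℝ) (1/2)) := by
  obtain ⟨j, rfl⟩ : ∃ j, ℓ = j + 1 := ⟨ℓ - 1, by omega⟩
  set p : ℕ := 6 ^ (j + 1) with hp
  set P : ℝ := ((p : ℕ) : ℝ) with hPdef
  have hP : (0 : ℝ) < P := by positivity
  have hPval : P = 6 * 6 ^ j := by rw [hPdef, hp]; push_cast; ring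
  -- rewrite the set
  have h1 : E p (n + 1) ∩ Ioc (-(1/2) : ℝ) (1/2)
      = (fun x : ℝ => P * x) ⁻¹' E p n ∩ Ioo (-(1/6) : ℝ) (1/6) := by
    rw [E_succ, inter_comm A, inter_assoc, A_inter]
  have h2 : Ioo (-(1/6) : ℝ) (1/6) = (fun x : ℝ => P * x) ⁻¹' Ioo (-(P/6)) (P/6) := by
    ext x
    simp only [mem_preimage, mem_Ioo]
    constructor
    · rintro ⟨ha, hb⟩; constructor <;> nlinarith
    · rintro ⟨ha, hb⟩; constructor <;> nlinarith
  have h3 : E p (n + 1) ∩ Ioc (-(1/2) : ℝ) (1/2)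
      = (fun x : ℝ => P * x) ⁻¹' (E p n ∩ Ioo (-(P/6)) (P/6)) := by
    rw [h1, h2, preimage_inter]
  rw [h3, Real.volume_preimage_mul_left (ne_of_gt hP)]
  -- replace Ioo by Ioc
  have h4 : volume (E p n ∩ Ioo (-(P/6)) (P/6)) = volume (E p n ∩ Ioc (-(P/6)) (P/6)) := by
    apply le_antisymm
    · exact measure_mono (inter_subset_inter_right _ Ioo_subset_Ioc_self)
    · calc volume (E p n ∩ Ioc (-(P/6)) (P/6))
          ≤ volume ((E p n ∩ Ioo (-(P/6)) (P/6)) ∪ {P/6}) := by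
            apply measure_mono
            rintro x ⟨hx, h5, h6⟩
            rcases eq_or_lt_of_le h6 with h | h
            · exact Or.inr (by simp [h])
            · exact Or.inl ⟨hx, h5, h⟩
        _ ≤ volume (E p n ∩ Ioo (-(P/6)) (P/6)) + volume ({P/6} : Set ℝ) := measure_union_le _ _
        _ = volume (E p n ∩ Ioo (-(P/6)) (P/6)) := by rw [Real.volume_singleton, add_zero]
  -- shift to Ioc 0 m
  have hq : (P : ℝ) / 6 = ((6 ^ j : ℤ) : ℝ) := by rw [hPval]; push_cast; ring
  have h5 : volume (E p n ∩ Ioc (-(P/6)) (P/6))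
      = volume (E p n ∩ Ioc 0 ((2 * 6 ^ j : ℕ) : ℝ)) := by
    have := shift_measure (E_int_shift p n) (-(P/6)) (P/6) (6 ^ j : ℤ)
    rw [show -(P/6) + ((6 ^ j : ℤ) : ℝ) = 0 by rw [hq]; ring,
      show P/6 + ((6 ^ j : ℤ) : ℝ) = ((2 * 6 ^ j : ℕ) : ℝ) by rw [hq]; push_cast; ring] at this
    exact this.symm
  rw [h4, h5, unit_blocks (measE p n) (E_int_shift p n),
    ← half_shift (measE p n) (E_int_shift p n)]
  rw [← mul_assoc]
  congr 1
  -- constant computation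
  have : ENNReal.ofReal |P⁻¹| * ((2 * 6 ^ j : ℕ) : ℝ≥0∞) = ENNReal.ofReal (P⁻¹ * (2 * 6 ^ j : ℕ)) := by
    rw [abs_of_pos (by positivity), ← ENNReal.ofReal_natCast (2 * 6 ^ j),
      ← ENNReal.ofReal_mul (by positivity)]
  rw [this, show P⁻¹ * ((2 * 6 ^ j : ℕ) : ℝ) = 1/3 by
    rw [hPval]; push_cast; field_simp; ring]
  rw [ENNReal.ofReal_div_of_pos (by norm_num)]
  simp

lemma volE (ℓ : ℕ) (hℓ : 1 ≤ ℓ) : ∀ n, 1 ≤ n →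
    volume (E (6 ^ ℓ) n ∩ Ioc (-(1/2) : ℝ) (1/2)) = (3 : ℝ≥0∞)⁻¹ ^ n := by
  intro n
  induction n with
  | zero => omega
  | succ n ih =>
    intro _
    rcases Nat.eq_zero_or_pos n with h | h
    · subst h
      rw [base, pow_one]
    · rw [step ℓ n hℓ, ih h, pow_succ, mul_comm]

lemma iterate_timesMap (p i : ℕ) (y : UnitAddCircle) : (timesMap p)^[i] y = p ^ i • y := by
  induction i with
  | zero => simp
  | succ i ih =>
    rw [Function.iterate_succ_apply', ih]
    show p • (p ^ i • y) = p ^ (i + 1) • y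
    rw [smul_smul, pow_succ, mul_comm]

lemma coe_nsmul (m : ℕ) (x : ℝ) :
    (m • ((x : ℝ) : UnitAddCircle)) = (((m : ℝ) * x : ℝ) : UnitAddCircle) := by
  induction m with
  | zero => simp
  | succ m ih =>
    rw [succ_nsmul, ih]
    have : (((m : ℕ) + 1 : ℝ) * x) = (m : ℝ) * x + x := by push_cast; ring
    rw [show (((m + 1 : ℕ) : ℝ) * x) = (m : ℝ) * x + x by push_cast; ring]
    push_cast
    rfl

lemma norm_lt_iff_A (y : ℝ) : ‖((y : ℝ) : UnitAddCircle)‖ < 1/6 ↔ y ∈ A := by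
  rw [UnitAddCircle.norm_eq]
  constructor
  · intro h; exact ⟨round y, h⟩
  · rintro ⟨k, hk⟩; exact lt_of_le_of_lt (round_le y k) hk

lemma preimage_bowen (p n : ℕ) :
    (((↑) : ℝ → UnitAddCircle)) ⁻¹' (bowenBall (timesMap p) n 0 (1/6)) = E p n := by
  ext x
  simp only [bowenBall, mem_preimage, mem_setOf_eq, E]
  refine forall₂_congr fun i hi => ?_
  rw [iterate_timesMap, iterate_timesMap, smul_zero, coe_nsmul, dist_zero_left]
  rw [show ((p ^ i : ℕ) : ℝ) = (p : ℝ) ^ i by push_cast; ring]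
  exact norm_lt_iff_A _

lemma measBowen (p n : ℕ) : MeasurableSet (bowenBall (timesMap p) n 0 (1/6)) := by
  have hc : Continuous (timesMap p) := by
    unfold timesMap
    exact continuous_nsmul p
  have heq : bowenBall (timesMap p) n 0 (1/6)
      = ⋂ i, ⋂ _ : i < n, ((timesMap p)^[i]) ⁻¹' Metric.ball ((timesMap p)^[i] 0) (1/6) := by
    ext y
    simp [bowenBall, Metric.mem_ball, dist_comm]
  rw [heq]
  exact MeasurableSet.iInter fun i => MeasurableSet.iInter fun _ =>
    ((hc.iterate i).measurable) measurableSet_ball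

end BowenAux

open BowenAux in
/-- For every `p = 6^ℓ` with `ℓ ≥ 1` and every positive integer `n`, the Bowen ball
about `0` for the map `f_p : x ↦ px` has Lebesgue measure `μ(B_n(0, 1/6)) = 3^{-n}`. -/
theorem measure_bowenBall_zero (ℓ : ℕ) (hℓ : 1 ≤ ℓ) (n : ℕ) (hn : 0 < n) :
    volume (bowenBall (timesMap (6 ^ ℓ)) n 0 (1/6)) = (3 : ℝ≥0∞)⁻¹ ^ n := by
  have hB := measBowen (6 ^ ℓ) n
  have hmp := UnitAddCircle.measurePreserving_mk (-(1/2))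
  have key := hmp.measure_preimage hB.nullMeasurableSet
  rw [Measure.restrict_apply (hB.preimage AddCircle.measurable_mk'), preimage_bowen] at key
  rw [← key, show (-(1/2) + 1 : ℝ) = 1/2 by norm_num]
  exact volE ℓ hℓ n hn
end

section
/- Let n be a positive integer and let x^{(0)}, …, x^{(n−1)} ∈ 𝕋. For any δ > 0, there is a positive integer p_0 such that for every integer p ≥ p_0 there exists y ∈ 𝕋 with d(f_p^i(y), x^{(i)}) < δ for all i = 0, …, n−1. -/
theorem exists_dist_iterate_le_of_forall_exists_preimage {X : Type*} [PseudoMetricSpace X]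
    [Nonempty X] {f : X → X} {ε : ℝ} (hf : ∀ z a : X, ∃ w, f w = z ∧ dist w a ≤ ε) :
    ∀ (n : ℕ) (x : Fin n → X), ∃ y, ∀ i : Fin n, dist (f^[i] y) (x i) ≤ ε
  | 0, _ => ⟨Classical.arbitrary X, fun i => i.elim0⟩
  | n + 1, x => by
    obtain ⟨y, hy⟩ := exists_dist_iterate_le_of_forall_exists_preimage hf n (Fin.tail x)
    obtain ⟨w, rfl, hw⟩ := hf y (x 0)
    refine ⟨w, Fin.cases hw fun i => ?_⟩
    rw [Fin.val_succ, Function.iterate_succ_apply]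
    exact hy i

theorem UnitAddCircle.exists_nsmul_eq_dist_le {p : ℕ} (hp : 0 < p) (z a : UnitAddCircle) :
    ∃ w : UnitAddCircle, p • w = z ∧ dist w a ≤ 1 / (2 * p) := by
  induction z using QuotientAddGroup.induction_on with | H s => ?_
  induction a using QuotientAddGroup.induction_on with | H t => ?_
  have hp' : (0 : ℝ) < p := Nat.cast_pos.mpr hp
  set k := round ((p : ℝ) * t - s)
  refine ⟨↑((s + k) / p), ?_, ?_⟩
  · rw [← AddCircle.coe_nsmul, nsmul_eq_mul, mul_div_cancel₀ _ hp'.ne', AddCircle.coe_add]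
    simp
  · have h : (s + k) / p - t = -(((p : ℝ) * t - s) - k) / p := by field_simp; ring
    calc _ = ‖(((s + k) / p - t : ℝ) : UnitAddCircle)‖ := by rw [dist_eq_norm, AddCircle.coe_sub]
      _ ≤ |(s + k) / p - t| := QuotientAddGroup.norm_mk_le_norm
      _ = |((p : ℝ) * t - s) - k| / p := by rw [h, abs_div, abs_neg, abs_of_pos hp']
      _ ≤ 1 / 2 / p := by gcongr; exact abs_sub_round _
      _ = 1 / (2 * p) := by rw [div_div]

theorem exists_tracing_point_general (n : ℕ) (x : Fin n → UnitAddCircle)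
    (δ : ℝ) (hδ : 0 < δ) :
    ∃ p₀ : ℕ, 0 < p₀ ∧ ∀ p : ℕ, p₀ ≤ p →
      ∃ y : UnitAddCircle, ∀ i : Fin n, dist ((timesMap p)^[i] y) (x i) < δ := by
  obtain ⟨N, hN⟩ := exists_nat_one_div_lt hδ
  refine ⟨N + 1, N.succ_pos, fun p hp => ?_⟩
  have hp₀ : 0 < p := N.succ_pos.trans_le hp
  obtain ⟨y, hy⟩ := exists_dist_iterate_le_of_forall_exists_preimage
    (UnitAddCircle.exists_nsmul_eq_dist_le hp₀) n x
  refine ⟨y, fun i => (hy i).trans_lt ?_⟩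
  calc 1 / (2 * (p : ℝ)) ≤ 1 / (N + 1) :=
        one_div_le_one_div_of_le (by positivity) (by norm_cast; omega)
    _ < δ := hN

/-- **Lemma 2.4.** Let `n` be a positive integer and `x⁽⁰⁾, …, x⁽ⁿ⁻¹⁾ ∈ 𝕋`.  For any
`δ > 0` there is `p₀` such that for every `p ≥ p₀` there is `y ∈ 𝕋` with
`d(f_p^i(y), x⁽ⁱ⁾) < δ` for all `i = 0, …, n-1`. -/
theorem exists_tracing_point (n : ℕ) (hn : 0 < n) (x : Fin n → UnitAddCircle)
    (δ : ℝ) (hδ : 0 < δ) :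
    ∃ p₀ : ℕ, 0 < p₀ ∧ ∀ p : ℕ, p₀ ≤ p →
      ∃ y : UnitAddCircle, ∀ i : Fin n, dist ((timesMap p)^[i] y) (x i) < δ :=
  exists_tracing_point_general n x δ hδ
end

section
/- Let n and k be positive integers and, for each j = 1, …, k, let x_j^{(0)}, x_j^{(1)}, …, x_j^{(n−1)} ∈ 𝕋. For any δ > 0, there is a positive integer p_0 such that for every integer p ≥ p_0 there exist y_1, …, y_k ∈ 𝕋 with d(f_p^i(y_j), x_j^{(i)}) < δ for all i = 0, …, n−1 and all j = 1, …, k. -/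
namespace AddCircle

variable {T : ℝ} [Fact (0 < T)]

theorem exists_nsmul_eq_dist_le {p : ℕ} (hp : 0 < p) (x y : AddCircle T) :
    ∃ z : AddCircle T, p • z = y ∧ dist z x ≤ T / (2 * p) := by
  -- Correct `x` by `r / p`, where `r` is the representative of `p • x - y` in `[-T/2, T/2)`.
  obtain ⟨r, hr, hrx⟩ : ∃ r ∈ Set.Ico (-(T / 2)) (-(T / 2) + T), (r : AddCircle T) = p • x - y := by
    rw [← Set.mem_image, coe_image_Ico_eq]; trivial
  have hp' : (0 : ℝ) < p := Nat.cast_pos.mpr hp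
  refine ⟨x - ↑(r / p), ?_, ?_⟩
  · rw [nsmul_sub, ← coe_nsmul, nsmul_eq_mul, mul_div_cancel₀ r hp'.ne', hrx, sub_sub_cancel]
  · have hr' : |r| ≤ T / 2 := abs_le.mpr ⟨hr.1, by linarith [hr.2]⟩
    calc dist (x - ↑(r / p)) x = ‖((r / p : ℝ) : AddCircle T)‖ := by
          rw [dist_eq_norm, sub_sub_cancel_left, norm_neg]
      _ ≤ |r / p| := QuotientAddGroup.norm_mk_le_norm
      _ ≤ T / (2 * p) := by
          rw [abs_div, Nat.abs_cast, ← div_div]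
          gcongr

theorem exists_pow_nsmul_dist_le {p : ℕ} (hp : 0 < p) :
    ∀ {n : ℕ} (x : Fin n → AddCircle T),
      ∃ y : AddCircle T, ∀ i : Fin n, dist (p ^ (i : ℕ) • y) (x i) ≤ T / (2 * p)
  | 0, _ => ⟨0, fun i => i.elim0⟩
  | n + 1, x => by
    obtain ⟨y', hy'⟩ := exists_pow_nsmul_dist_le hp (Fin.tail x)
    obtain ⟨y, rfl, hy⟩ := exists_nsmul_eq_dist_le hp (x 0) y'
    refine ⟨y, Fin.cases (by simpa using hy) fun i => ?_⟩
    simpa [pow_succ, mul_smul, Fin.tail] using hy' i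

end AddCircle

theorem timesMap_iterate (p i : ℕ) : (timesMap p)^[i] = (p ^ i • ·) :=
  smul_iterate p i

theorem exists_tracing_points_general (n k : ℕ)
    (x : Fin k → Fin n → UnitAddCircle) (δ : ℝ) (hδ : 0 < δ) :
    ∃ p₀ : ℕ, 0 < p₀ ∧ ∀ p : ℕ, p₀ ≤ p →
      ∃ y : Fin k → UnitAddCircle,
        ∀ j : Fin k, ∀ i : Fin n, dist ((timesMap p)^[i] (y j)) (x j i) < δ := by
  refine ⟨⌈1 / δ⌉₊ + 1, Nat.succ_pos _, fun p hp => ?_⟩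
  have hp0 : 0 < p := Nat.zero_lt_of_lt hp
  have hp' : (0 : ℝ) < p := Nat.cast_pos.mpr hp0
  have hδp : 1 / δ < p :=
    (Nat.le_ceil _).trans_lt (by exact_mod_cast Nat.lt_of_succ_le hp)
  have hbound : 1 / (2 * p : ℝ) < δ := by
    calc 1 / (2 * p : ℝ) ≤ 1 / p := by gcongr; linarith
      _ < δ := (one_div_lt hδ hp').mp hδp
  choose y hy using fun j => AddCircle.exists_pow_nsmul_dist_le hp0 (x j)
  exact ⟨y, fun j i => by rw [timesMap_iterate]; exact (hy j i).trans_lt hbound⟩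

/-- **Proposition 2.5.** Let `n, k` be positive integers and, for each `j = 1, …, k`,
let `x_j⁽⁰⁾, …, x_j⁽ⁿ⁻¹⁾ ∈ 𝕋`.  For any `δ > 0` there is `p₀` such that for every
`p ≥ p₀` there are `y₁, …, y_k ∈ 𝕋` with `d(f_p^i(y_j), x_j⁽ⁱ⁾) < δ` for all
`i = 0, …, n-1` and `j = 1, …, k`. -/
theorem exists_tracing_points (n k : ℕ) (hn : 0 < n) (hk : 0 < k)
    (x : Fin k → Fin n → UnitAddCircle) (δ : ℝ) (hδ : 0 < δ) :
    ∃ p₀ : ℕ, 0 < p₀ ∧ ∀ p : ℕ, p₀ ≤ p →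
      ∃ y : Fin k → UnitAddCircle,
        ∀ j : Fin k, ∀ i : Fin n, dist ((timesMap p)^[i] (y j)) (x j i) < δ :=
  exists_tracing_points_general n k x δ hδ
end

section
/- For every positive integer r, the Ramsey number satisfies R(3, r) > 2^r; that is, there is a coloring of the edges of the complete graph on 2^r vertices with r colors containing no monochromatic triangle. -/
/-!
Label the vertices by the binary words of length `r` and colour the edge `xy` by the leading
bit of `x xor y`, i.e. the most significant position where `x` and `y` differ. If the three
edges of a triangle `xyz` had the same colour `k`, the bit `k` of `x`, `y`, `z` would be pairwise
distinct, which is impossible for three bits.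
-/

namespace Nat

theorem testBit_log_two_self {n : ℕ} (hn : n ≠ 0) : n.testBit (log 2 n) = true :=
  testBit_of_two_pow_le_and_two_pow_add_one_gt (pow_log_le_self 2 hn)
    (lt_pow_succ_log_self one_lt_two n)

theorem not_log_two_xor_eq_and_eq {a b c : ℕ} (hab : a ≠ b) (hbc : b ≠ c) (hac : a ≠ c) :
    ¬ (log 2 (a ^^^ b) = log 2 (b ^^^ c) ∧ log 2 (a ^^^ b) = log 2 (a ^^^ c)) := by
  rintro ⟨hbc_eq, hac_eq⟩
  have leading_bit {x y : ℕ} (hxy : x ≠ y) : (x ^^^ y).testBit (log 2 (x ^^^ y)) = true :=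
    testBit_log_two_self fun h => hxy (xor_eq_zero_iff.mp h)
  have hsplit : a ^^^ c = (a ^^^ b) ^^^ (b ^^^ c) := by
    rw [xor_assoc, ← xor_assoc b, Nat.xor_self, zero_xor]
  have h_ac := leading_bit hac
  rw [← hac_eq, hsplit, testBit_xor, leading_bit hab, hbc_eq, leading_bit hbc] at h_ac
  exact Bool.false_ne_true h_ac

end Nat

/-- For every positive integer `r`, the Ramsey number satisfies `R(3, r) > 2^r`:
there is an edge-coloring of the complete graph on `2^r` vertices using `r` colors
with no monochromatic triangle. -/
theorem ramsey_three_gt_two_pow (r : ℕ) (hr : 0 < r) :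
    ∃ c : Fin (2 ^ r) → Fin (2 ^ r) → Fin r,
      (∀ i j, c i j = c j i) ∧
      ¬ ∃ x y z : Fin (2 ^ r), x ≠ y ∧ y ≠ z ∧ x ≠ z ∧
          c x y = c y z ∧ c x y = c x z := by
  refine ⟨fun x y => ⟨Nat.log 2 (x.val ^^^ y.val),
    Nat.log_lt_of_lt_pow' hr.ne' (Nat.xor_lt_two_pow x.isLt y.isLt)⟩, ?_, ?_⟩
  · intro i j
    simp only [Nat.xor_comm]
  · rintro ⟨x, y, z, hxy, hyz, hxz, hxy_yz, hxy_xz⟩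
    exact Nat.not_log_two_xor_eq_and_eq (Fin.val_ne_of_ne hxy) (Fin.val_ne_of_ne hyz)
      (Fin.val_ne_of_ne hxz) ⟨congrArg Fin.val hxy_yz, congrArg Fin.val hxy_xz⟩
end

section
/- Let X be a compact metrizable topological space with more than one point. Then there exists a metric d on X, compatible with the topology of X, such that C_d(X, 1/3) = 2; that is, there exist two points of X at d-distance > 1/3, but no three pairwise distinct points of X are pairwise at d-distance > 1/3. -/
/-!
Take a compatible metric `ρ`, two points `a ≠ b` and an Urysohn function `f : X → [0, 1/2]`
with `f a = 0`, `f b = 1/2`, and put `d x y = min (ρ x y) (1/12) + |f x - f y|`. Truncation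
keeps the small `ρ`-balls, so `d` is still compatible, and `d a b ≥ 1/2`. On the other hand
`d x y > 1/3` forces `|f x - f y| > 1/4`, and no three values in an interval of length `1/2`
are pairwise more than `1/4` apart.
-/

open Set

section TruncAdd

variable {X Y : Type*} [MetricSpace X] [PseudoMetricSpace Y]

theorem min_dist_triangle {c : ℝ} (hc : 0 ≤ c) (x y z : X) :
    min (dist x z) c ≤ min (dist x y) c + min (dist y z) c := by
  have := dist_triangle x y z
  rcases le_total (dist x y) c with h₁ | h₁ <;>
    rcases le_total (dist y z) c with h₂ | h₂ <;>
    simp only [min_eq_left, min_eq_right, h₁, h₂] <;>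
    linarith [min_le_left (dist x z) c, min_le_right (dist x z) c, dist_nonneg (x := x) (y := y),
      dist_nonneg (x := y) (y := z)]

@[reducible] noncomputable def truncAddMetric (c : ℝ) (hc : 0 < c) (f : X → Y) :
    MetricSpace X where
  dist x y := min (dist x y) c + dist (f x) (f y)
  dist_self x := by simp [hc.le]
  dist_comm x y := by simp only [dist_comm]
  dist_triangle x y z := by
    linarith [min_dist_triangle hc.le x y z, dist_triangle (f x) (f y) (f z)]
  eq_of_dist_eq_zero {x y} h := by
    have : min (dist x y) c ≤ 0 := by linarith [dist_nonneg (x := f x) (y := f y)]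
    exact dist_le_zero.1 <| (min_le_iff.1 this).resolve_right hc.not_ge

variable {c : ℝ} (hc : 0 < c)

theorem truncAddMetric_dist (f : X → Y) (x y : X) :
    (truncAddMetric c hc f).dist x y = min (dist x y) c + dist (f x) (f y) := rfl

theorem min_dist_le_truncAddMetric_dist (f : X → Y) (x y : X) :
    min (dist x y) c ≤ (truncAddMetric c hc f).dist x y :=
  le_add_of_nonneg_right dist_nonneg

theorem dist_le_truncAddMetric_dist (f : X → Y) (x y : X) :
    dist (f x) (f y) ≤ (truncAddMetric c hc f).dist x y :=
  le_add_of_nonneg_left (le_min dist_nonneg hc.le)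

theorem truncAddMetric_dist_le (f : X → Y) (x y : X) :
    (truncAddMetric c hc f).dist x y ≤ c + dist (f x) (f y) :=
  add_le_add_left (min_le_right _ _) _

theorem truncAddMetric_topology_eq {f : X → Y} (hf : Continuous f) :
    (truncAddMetric c hc f).toUniformSpace.toTopologicalSpace =
      ‹MetricSpace X›.toUniformSpace.toTopologicalSpace := by
  refine le_antisymm (continuous_id_iff_le.1 ?_) (continuous_id_iff_le.1 ?_)
  · refine (@Metric.continuous_iff X X (truncAddMetric c hc f).toPseudoMetricSpace _ id).2
      fun x ε hε => ?_
    refine ⟨min ε c, lt_min hε hc, fun y hy => ?_⟩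
    by_contra! hεy
    exact (min_le_min_right c hεy).not_gt <|
      (min_dist_le_truncAddMetric_dist hc f y x).trans_lt hy
  · refine
      (@continuous_iff_continuous_dist X X (truncAddMetric c hc f).toPseudoMetricSpace _ id).2 ?_
    simp only [id, truncAddMetric_dist]
    fun_prop

end TruncAdd

theorem not_pairwise_lt_abs_sub_of_mem_Icc {a b r u v w : ℝ} (hab : b - a ≤ 2 * r)
    (hu : u ∈ Icc a b) (hv : v ∈ Icc a b) (hw : w ∈ Icc a b) :
    ¬ (r < |u - v| ∧ r < |v - w| ∧ r < |u - w|) := by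
  rintro ⟨huv, hvw, huw⟩
  obtain ⟨hu₁, hu₂⟩ := hu; obtain ⟨hv₁, hv₂⟩ := hv; obtain ⟨hw₁, hw₂⟩ := hw
  rcases lt_abs.1 huv with h₁ | h₁ <;> rcases lt_abs.1 hvw with h₂ | h₂ <;>
    rcases lt_abs.1 huw with h₃ | h₃ <;> linarith

theorem exists_compatible_metric_capacity_two_general (X : Type*) [t : TopologicalSpace X]
    [TopologicalSpace.MetrizableSpace X] [Nontrivial X] :
    ∃ m : MetricSpace X, m.toUniformSpace.toTopologicalSpace = t ∧
      (∃ x y : X, x ≠ y ∧ 1/3 < m.dist x y) ∧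
      ¬ ∃ x y z : X, x ≠ y ∧ y ≠ z ∧ x ≠ z ∧
          1/3 < m.dist x y ∧ 1/3 < m.dist y z ∧ 1/3 < m.dist x z := by
  obtain ⟨ρ, rfl⟩ : ∃ ρ : MetricSpace X, ρ.toUniformSpace.toTopologicalSpace = t :=
    ⟨TopologicalSpace.metrizableSpaceMetric X, rfl⟩
  obtain ⟨a, b, hab⟩ := exists_pair_ne X
  obtain ⟨f, hfa, hfb, hf⟩ := exists_bounded_mem_Icc_of_closed_of_le isClosed_singleton
    isClosed_singleton (disjoint_singleton.2 hab) (by norm_num : (0 : ℝ) ≤ 1 / 2)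
  have hc : (0 : ℝ) < 1 / 12 := by norm_num
  have far : ∀ x y, 1 / 3 < (truncAddMetric _ hc f).dist x y → 1 / 4 < |f x - f y| :=
    fun x y h => by linarith [truncAddMetric_dist_le hc f x y, Real.dist_eq (f x) (f y)]
  refine ⟨truncAddMetric _ hc f, truncAddMetric_topology_eq hc f.continuous,
    ⟨a, b, hab, ?_⟩, ?_⟩
  · have hfab : dist (f a) (f b) = 1 / 2 := by simp [Real.dist_eq, hfa rfl, hfb rfl]
    linarith [dist_le_truncAddMetric_dist hc f a b]
  · rintro ⟨x, y, z, -, -, -, hxy, hyz, hxz⟩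
    exact not_pairwise_lt_abs_sub_of_mem_Icc (by norm_num) (hf x) (hf y) (hf z)
      ⟨far _ _ hxy, far _ _ hyz, far _ _ hxz⟩

/-- **Remark 1.5(2).** Every compact metrizable space `X` with more than one point
admits a compatible metric `d` with `C_d(X, 1/3) = 2`: some two points are at
`d`-distance `> 1/3`, but no three pairwise distinct points are pairwise at
`d`-distance `> 1/3`. -/
theorem exists_compatible_metric_capacity_two (X : Type*) [t : TopologicalSpace X]
    [CompactSpace X] [TopologicalSpace.MetrizableSpace X] [Nontrivial X] :
    ∃ m : MetricSpace X, m.toUniformSpace.toTopologicalSpace = t ∧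
      (∃ x y : X, x ≠ y ∧ 1/3 < m.dist x y) ∧
      ¬ ∃ x y z : X, x ≠ y ∧ y ≠ z ∧ x ≠ z ∧
          1/3 < m.dist x y ∧ 1/3 < m.dist y z ∧ 1/3 < m.dist x z :=
  exists_compatible_metric_capacity_two_general X (t := t)
end

section
/- Let δ > 0, let n be a positive integer, let x^{(0)}, …, x^{(n−1)} ∈ 𝕋, and set I_j = {y ∈ 𝕋 : d(y, x^{(j)}) < δ} for j = 0, …, n−1. If p is a positive integer such that f_p maps every open arc of length 2δ onto 𝕋, then the intersection I_0 ∩ f_p^{−1}(I_1) ∩ ⋯ ∩ f_p^{−(n−1)}(I_{n−1}) is nonempty. -/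
/-- The open arc `{x + t : |t| < δ}` of length `2δ` about `x` in the circle `ℝ/ℤ`. -/
def openArc (x : UnitAddCircle) (δ : ℝ) : Set UnitAddCircle :=
  (fun t : ℝ => x + (t : UnitAddCircle)) '' Set.Ioo (-δ) δ

open Set

theorem Set.nonempty_iInter_preimage_iterate {α : Type*} [Nonempty α] (f : α → α) :
    ∀ {n : ℕ} (U : Fin n → Set α), (∀ i, f '' U i = univ) →
      (⋂ i : Fin n, f^[i] ⁻¹' U i).Nonempty
  | 0, _, _ => by simp
  | n + 1, U, hU => by
    obtain ⟨y, hy⟩ := nonempty_iInter_preimage_iterate f (fun i => U i.succ) fun _ => hU _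
    obtain ⟨z, hz, rfl⟩ : y ∈ f '' U 0 := hU 0 ▸ mem_univ y
    refine ⟨z, mem_iInter.2 fun i => ?_⟩
    cases i using Fin.cases with
    | zero => exact hz
    | succ j =>
      rw [mem_preimage, Fin.val_succ, Function.iterate_succ_apply]
      exact mem_iInter.1 hy j

theorem openArc_subset_ball (x : UnitAddCircle) (δ : ℝ) : openArc x δ ⊆ Metric.ball x δ := by
  rintro _ ⟨t, ht, rfl⟩
  calc dist (x + (t : UnitAddCircle)) x = ‖(t : UnitAddCircle)‖ := by simp [dist_eq_norm]
    _ ≤ ‖t‖ := QuotientAddGroup.norm_mk_le_norm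
    _ < δ := abs_lt.2 ht

theorem inter_preimages_nonempty_general (δ : ℝ) (n : ℕ)
    (x : Fin n → UnitAddCircle) (p : ℕ)
    (harc : ∀ z : UnitAddCircle, timesMap p '' openArc z δ = Set.univ) :
    (⋂ i : Fin n, (timesMap p)^[(i : ℕ)] ⁻¹' Metric.ball (x i) δ).Nonempty :=
  (nonempty_iInter_preimage_iterate (timesMap p) (fun i => openArc (x i) δ) fun _ => harc _).mono
    (iInter_mono fun _ => preimage_mono (openArc_subset_ball _ _))

/-- Let `δ > 0`, `n ≥ 1`, `x⁽⁰⁾, …, x⁽ⁿ⁻¹⁾ ∈ 𝕋` and `I_j = {y : d(y, x⁽ʲ⁾) < δ}`.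
If `p` is a positive integer such that `f_p` maps every open arc of length `2δ` onto
the whole circle, then `I_0 ∩ f_p^{-1}(I_1) ∩ ⋯ ∩ f_p^{-(n-1)}(I_{n-1}) ≠ ∅`. -/
theorem inter_preimages_nonempty (δ : ℝ) (hδ : 0 < δ) (n : ℕ) (hn : 0 < n)
    (x : Fin n → UnitAddCircle) (p : ℕ) (hp : 0 < p)
    (harc : ∀ z : UnitAddCircle, timesMap p '' openArc z δ = Set.univ) :
    (⋂ i : Fin n, (timesMap p)^[(i : ℕ)] ⁻¹' Metric.ball (x i) δ).Nonempty :=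
  inter_preimages_nonempty_general δ n x p harc
end
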